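/- Suppose λ_1 ≥ ⋯ ≥ λ_{N'} > 0 are such that λ_i = σ² for all i > p and λ_p > σ², where 1 ≤ p < N'. Then the MDL data term D(ζ) = −(N'−ζ)·M'·log(GM(ζ)/AM(ζ)) satisfies D(p) = 0 and D(ζ) > 0 for every ζ < p. -/

import Mathlib

/-!
For `ζ = p` the tail `λ_{p+1}, …, λ_{N'}` is constant, so its geometric and arithmetic means agree
and the logarithm vanishes. For `ζ < p` the tail contains both `λ_p > σ²` and `λ_{N'} = σ²`, so
the strict AM-GM inequality makes `GM/AM < 1` and the logarithm negative.
-/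

open Finset

namespace MDL

variable {ι : Type*}

noncomputable def geomMean (s : Finset ι) (z : ι → ℝ) : ℝ :=
  (∏ i ∈ s, z i) ^ ((#s : ℝ)⁻¹)

noncomputable def arithMean (s : Finset ι) (z : ι → ℝ) : ℝ :=
  (∑ i ∈ s, z i) / #s

lemma geomMean_eq_prod_rpow (s : Finset ι) {z : ι → ℝ} (hz : ∀ i ∈ s, 0 ≤ z i) :
    geomMean s z = ∏ i ∈ s, z i ^ ((#s : ℝ)⁻¹) :=
  (Real.finsetProd_rpow s z hz _).symm

lemma arithMean_eq_sum_mul (s : Finset ι) (z : ι → ℝ) :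
    arithMean s z = ∑ i ∈ s, (#s : ℝ)⁻¹ * z i := by
  rw [arithMean, ← mul_sum, div_eq_inv_mul]

lemma sum_inv_card {s : Finset ι} (hs : s.Nonempty) : ∑ _i ∈ s, (#s : ℝ)⁻¹ = 1 := by
  rw [sum_const, nsmul_eq_mul, mul_inv_cancel₀ (by simpa using hs.ne_empty)]

lemma geomMean_of_const {s : Finset ι} (hs : s.Nonempty) {z : ι → ℝ} {c : ℝ} (hc : 0 ≤ c)
    (hz : ∀ i ∈ s, z i = c) : geomMean s z = c := by
  rw [geomMean_eq_prod_rpow s fun i hi => (hz i hi).symm ▸ hc]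
  exact Real.geom_mean_weighted_of_constant s _ z c (fun _ _ => by positivity) (sum_inv_card hs)
    (fun i hi => (hz i hi).symm ▸ hc) fun i hi _ => hz i hi

lemma arithMean_of_const {s : Finset ι} (hs : s.Nonempty) {z : ι → ℝ} {c : ℝ}
    (hz : ∀ i ∈ s, z i = c) : arithMean s z = c := by
  rw [arithMean_eq_sum_mul]
  exact Real.arith_mean_weighted_of_constant s _ z c (sum_inv_card hs) fun i hi _ => hz i hi

lemma geomMean_lt_arithMean {s : Finset ι} {z : ι → ℝ} (hz : ∀ i ∈ s, 0 ≤ z i)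
    (hne : ∃ j ∈ s, ∃ k ∈ s, z j ≠ z k) : geomMean s z < arithMean s z := by
  have hs : s.Nonempty := let ⟨j, hj, _⟩ := hne; ⟨j, hj⟩
  rw [geomMean_eq_prod_rpow s hz, arithMean_eq_sum_mul]
  exact (Real.geom_mean_lt_arith_mean_weighted_iff_of_pos s _ z
    (fun _ _ => inv_pos.mpr (by exact_mod_cast hs.card_pos)) (sum_inv_card hs) hz).mpr hne

noncomputable def dataTerm (N' : ℕ) (M' : ℝ) (l : ℕ → ℝ) (ζ : ℕ) : ℝ :=
  -(((N' : ℝ) - ζ) * M' *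
    Real.log ((∏ i ∈ Ioc ζ N', l i) ^ (((N' : ℝ) - ζ)⁻¹) /
      ((∑ i ∈ Ioc ζ N', l i) / ((N' : ℝ) - ζ))))

lemma dataTerm_eq {N' ζ : ℕ} (hζ : ζ ≤ N') (M' : ℝ) (l : ℕ → ℝ) :
    dataTerm N' M' l ζ =
      -(#(Ioc ζ N') * M' * Real.log (geomMean (Ioc ζ N') l / arithMean (Ioc ζ N') l)) := by
  rw [dataTerm, geomMean, arithMean, Nat.card_Ioc, Nat.cast_sub hζ]

lemma dataTerm_eq_zero_of_const {N' ζ : ℕ} (hζ : ζ < N') (M' : ℝ) {l : ℕ → ℝ} {c : ℝ}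
    (hc : 0 < c) (hl : ∀ i ∈ Ioc ζ N', l i = c) : dataTerm N' M' l ζ = 0 := by
  have hs : (Ioc ζ N').Nonempty := nonempty_Ioc.mpr hζ
  rw [dataTerm_eq hζ.le, geomMean_of_const hs hc.le hl, arithMean_of_const hs hl,
    div_self hc.ne', Real.log_one, mul_zero, neg_zero]

lemma dataTerm_pos {N' ζ : ℕ} {M' : ℝ} (hM : 0 < M') (hζ : ζ < N') {l : ℕ → ℝ}
    (hpos : ∀ i ∈ Ioc ζ N', 0 < l i) (hne : ∃ j ∈ Ioc ζ N', ∃ k ∈ Ioc ζ N', l j ≠ l k) :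
    0 < dataTerm N' M' l ζ := by
  have hs : (Ioc ζ N').Nonempty := nonempty_Ioc.mpr hζ
  have hlt := geomMean_lt_arithMean (fun i hi => (hpos i hi).le) hne
  have hgm : 0 < geomMean (Ioc ζ N') l := Real.rpow_pos_of_pos (prod_pos hpos) _
  have hlog : Real.log (geomMean (Ioc ζ N') l / arithMean (Ioc ζ N') l) < 0 :=
    Real.log_neg (div_pos hgm (hgm.trans hlt)) ((div_lt_one (hgm.trans hlt)).mpr hlt)
  rw [dataTerm_eq hζ.le, neg_pos]
  exact mul_neg_of_pos_of_neg (mul_pos (by exact_mod_cast hs.card_pos) hM) hlog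

end MDL

theorem stmt15_general (N' p : ℕ) (hp : p < N') (M' σ2 : ℝ)
    (hM : 0 < M') (hσ : 0 < σ2) (l : ℕ → ℝ)
    (hpos : ∀ i ∈ Finset.Icc 1 N', 0 < l i)
    (hnoise : ∀ i, p < i → i ≤ N' → l i = σ2) (hsig : σ2 < l p) :
    (fun ζ : ℕ => -(((N' : ℝ) - ζ) * M' *
        Real.log ((∏ i ∈ Finset.Ioc ζ N', l i) ^ (((N' : ℝ) - ζ)⁻¹) /
          ((∑ i ∈ Finset.Ioc ζ N', l i) / ((N' : ℝ) - ζ))))) p = 0 ∧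
    ∀ ζ < p, 0 < (fun ζ : ℕ => -(((N' : ℝ) - ζ) * M' *
        Real.log ((∏ i ∈ Finset.Ioc ζ N', l i) ^ (((N' : ℝ) - ζ)⁻¹) /
          ((∑ i ∈ Finset.Ioc ζ N', l i) / ((N' : ℝ) - ζ))))) ζ := by
  refine ⟨MDL.dataTerm_eq_zero_of_const hp M' hσ fun i hi => hnoise i (mem_Ioc.mp hi).1
    (mem_Ioc.mp hi).2, fun ζ hζ => MDL.dataTerm_pos hM (hζ.trans hp) ?_ ?_⟩
  · intro i hi
    exact hpos i (mem_Icc.mpr ⟨(Nat.zero_le ζ).trans_lt (mem_Ioc.mp hi).1, (mem_Ioc.mp hi).2⟩)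
  · refine ⟨p, mem_Ioc.mpr ⟨hζ, hp.le⟩, N', mem_Ioc.mpr ⟨hζ.trans hp, le_rfl⟩, ?_⟩
    rw [hnoise N' hp le_rfl]
    exact hsig.ne'

/-- With λ_1 ≥ ⋯ ≥ λ_{N'} > 0, λ_i = σ² for i > p and λ_p > σ², the MDL data
term D(ζ) = −(N'−ζ)·M'·log(GM(ζ)/AM(ζ)) satisfies D(p) = 0 and D(ζ) > 0 for ζ < p. -/
theorem stmt15 (N' p : ℕ) (hp1 : 1 ≤ p) (hp : p < N') (M' σ2 : ℝ)
    (hM : 0 < M') (hσ : 0 < σ2) (l : ℕ → ℝ)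
    (hpos : ∀ i ∈ Finset.Icc 1 N', 0 < l i)
    (hmono : ∀ i j : ℕ, 1 ≤ i → i ≤ j → j ≤ N' → l j ≤ l i)
    (hnoise : ∀ i, p < i → i ≤ N' → l i = σ2) (hsig : σ2 < l p) :
    (fun ζ : ℕ => -(((N' : ℝ) - ζ) * M' *
        Real.log ((∏ i ∈ Finset.Ioc ζ N', l i) ^ (((N' : ℝ) - ζ)⁻¹) /
          ((∑ i ∈ Finset.Ioc ζ N', l i) / ((N' : ℝ) - ζ))))) p = 0 ∧
    ∀ ζ < p, 0 < (fun ζ : ℕ => -(((N' : ℝ) - ζ) * M' *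
        Real.log ((∏ i ∈ Finset.Ioc ζ N', l i) ^ (((N' : ℝ) - ζ)⁻¹) /
          ((∑ i ∈ Finset.Ioc ζ N', l i) / ((N' : ℝ) - ζ))))) ζ :=
  stmt15_general N' p hp M' σ2 hM hσ l hpos hnoise hsig
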